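/- Energy conservation of the time-continuous discrete system: let w : {0,…,n−1} → ℝ, and for an n×n complex matrix U define U^♭ to be the matrix whose row 0 has entries (U^♭)_{0s} = U_{0s}·w_s and all other entries zero. Let U : ℝ → Mₙ(ℂ) be differentiable and suppose that for every t, Tr( ( (d/dt)(U(t)^♭) + U(t)*·U(t)^♭ − U(t)^♭·U(t)* ) · U(t)* ) = 0. Then the energy E(t) = Tr(U(t)^♭·U(t)*) is constant in t. -/

import Mathlib

open Matrix

attribute [local instance] Matrix.normedAddCommGroup Matrix.normedSpace

/-!
The flat pairing `Tr(M^♭ N*) = ∑ₛ M₀ₛ wₛ conj N₀ₛ` is Hermitian because the weights are real, so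
`E' = Tr(U̇^♭ U*) + conj Tr(U̇^♭ U*)`. Testing the equation against `U` kills the commutator
term, since `Tr((X B - B X) X) = 0`, and leaves `Tr(U̇^♭ U*) = 0`. Hence `E' = 0`.
-/

open ComplexConjugate

theorem trace_commutator_mul_self {ι R : Type*} [Fintype ι] [CommRing R] (X B : Matrix ι ι R) :
    trace ((X * B - B * X) * X) = 0 := by
  rw [sub_mul, trace_sub, Matrix.mul_assoc, trace_mul_comm X, sub_self]

theorem hasDerivAt_matrix_iff {m n 𝕜 E : Type*} [Fintype m] [Fintype n]
    [NontriviallyNormedField 𝕜] [NormedAddCommGroup E] [NormedSpace 𝕜 E]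
    {U : 𝕜 → Matrix m n E} {U' : Matrix m n E} {t : 𝕜} :
    HasDerivAt U U' t ↔ ∀ i j, HasDerivAt (fun τ => U τ i j) (U' i j) t :=
  hasDerivAt_pi.trans (forall_congr' fun _ => hasDerivAt_pi)

section RowFlat

variable {ι : Type*} [Fintype ι] [DecidableEq ι]

def rowFlat (i₀ : ι) (w : ι → ℝ) (M : Matrix ι ι ℂ) : Matrix ι ι ℂ :=
  of fun i s => if i = i₀ then M i₀ s * w s else 0

variable (i₀ : ι) (w : ι → ℝ)

theorem trace_rowFlat_mul_conjTranspose (M N : Matrix ι ι ℂ) :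
    trace (rowFlat i₀ w M * Nᴴ) = ∑ s, M i₀ s * w s * conj (N i₀ s) := by
  simp [trace, mul_apply, rowFlat, ite_mul]

theorem conj_trace_rowFlat_mul_conjTranspose (M N : Matrix ι ι ℂ) :
    conj (trace (rowFlat i₀ w M * Nᴴ)) = trace (rowFlat i₀ w N * Mᴴ) := by
  simp only [trace_rowFlat_mul_conjTranspose, map_sum, map_mul, Complex.conj_ofReal,
    Complex.conj_conj]
  exact Finset.sum_congr rfl fun s _ => by ring

theorem hasDerivAt_rowFlat {U : ℝ → Matrix ι ι ℂ} {U' : Matrix ι ι ℂ} {t : ℝ}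
    (hU : HasDerivAt U U' t) : HasDerivAt (fun τ => rowFlat i₀ w (U τ)) (rowFlat i₀ w U') t := by
  rw [hasDerivAt_matrix_iff] at hU ⊢
  intro i s
  by_cases hi : i = i₀
  · simpa [rowFlat, hi] using (hU i₀ s).mul_const (w s : ℂ)
  · simpa [rowFlat, hi] using hasDerivAt_const t (0 : ℂ)

theorem hasDerivAt_trace_rowFlat_mul_conjTranspose_self {U : ℝ → Matrix ι ι ℂ}
    {U' : Matrix ι ι ℂ} {t : ℝ} (hU : HasDerivAt U U' t) :
    HasDerivAt (fun τ => trace (rowFlat i₀ w (U τ) * (U τ)ᴴ))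
      (trace (rowFlat i₀ w U' * (U t)ᴴ) + conj (trace (rowFlat i₀ w U' * (U t)ᴴ))) t := by
  rw [conj_trace_rowFlat_mul_conjTranspose]
  simp only [trace_rowFlat_mul_conjTranspose, ← Finset.sum_add_distrib]
  refine HasDerivAt.fun_sum fun s _ => ?_
  have hUs := hasDerivAt_matrix_iff.mp hU i₀ s
  exact ((hUs.mul_const (w s : ℂ)).fun_mul hUs.star).congr_deriv (by rw [Complex.star_def])

end RowFlat

/-- Energy conservation of the time-continuous discrete system: if the flat
operator has real weights `w_s` and
`Tr((d/dt U^♭ + U*·U^♭ − U^♭·U*)·U*) = 0` for all `t`, then the energy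
`E(t) = Tr(U(t)^♭·U(t)*)` is constant. -/
theorem energy_conservation_continuous_time (n : ℕ) (hn : 0 < n)
    (w : Fin n → ℝ)
    (flat : Matrix (Fin n) (Fin n) ℂ → Matrix (Fin n) (Fin n) ℂ)
    (hflat : ∀ (U : Matrix (Fin n) (Fin n) ℂ) (i s : Fin n),
      flat U i s =
        if i = (⟨0, hn⟩ : Fin n) then U ⟨0, hn⟩ s * (w s : ℂ) else 0)
    (U : ℝ → Matrix (Fin n) (Fin n) ℂ) (hU : Differentiable ℝ U)
    (heq : ∀ t : ℝ,
      Matrix.trace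
        ((deriv (fun τ => flat (U τ)) t + (U t)ᴴ * flat (U t)
            - flat (U t) * (U t)ᴴ) * (U t)ᴴ) = 0)
    (t₁ t₂ : ℝ) :
    Matrix.trace (flat (U t₁) * (U t₁)ᴴ) =
      Matrix.trace (flat (U t₂) * (U t₂)ᴴ) := by
  obtain rfl : flat = rowFlat ⟨0, hn⟩ w := funext fun M => ext (hflat M)
  -- Restated so that `deriv U t` carries the plain matrix instances used in `heq`, not the
  -- sup-norm ones that `Differentiable` produces; `rw` would not identify the two.
  have hU' (t : ℝ) : HasDerivAt U (deriv U t) t := (hU t).hasDerivAt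
  have hdot (t : ℝ) : trace (rowFlat ⟨0, hn⟩ w (deriv U t) * (U t)ᴴ) = 0 := by
    have hflat' : deriv (fun τ => rowFlat ⟨0, hn⟩ w (U τ)) t = rowFlat ⟨0, hn⟩ w (deriv U t) :=
      (hasDerivAt_rowFlat _ _ (hU' t)).deriv
    simpa only [hflat', add_sub_assoc, add_mul, trace_add, trace_commutator_mul_self, add_zero]
      using heq t
  have hE (t : ℝ) := hasDerivAt_trace_rowFlat_mul_conjTranspose_self ⟨0, hn⟩ w (hU' t)
  exact is_const_of_deriv_eq_zero (fun t => (hE t).differentiableAt)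
    (fun t => by rw [(hE t).deriv, hdot, map_zero, add_zero]) t₁ t₂
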